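/- arXiv:1401.4788 — 5 statements merged into one kernel-verified Lean document; each statement's English description precedes it below -/
import Mathlib

section
/- Let p(x;s) = (1/π)·s/(x²+s²) be the Cauchy density with scale s > 0. For s₁, s₂ > 0 and α ∈ [0,1], the integral of the pointwise weighted harmonic mean satisfies ∫ p₁p₂/((1-α)p₁ + α p₂) dx = s₁s₂ / (((1-α)s₁ + α s₂) · s_α), where s_α = √(((1-α)s₁s₂² + α s₂s₁²)/((1-α)s₁ + α s₂)) and pᵢ(x) = p(x;sᵢ). -/
open Real MeasureTheory

lemma cauchy_int (s : ℝ) (hs : 0 < s) : ∫ x : ℝ, s / (x ^ 2 + s ^ 2) = π := by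
  have h : ∀ x : ℝ, s / (x ^ 2 + s ^ 2) = s⁻¹ * (1 + (x / s) ^ 2)⁻¹ := by
    intro x
    have h1 : x ^ 2 + s ^ 2 > 0 := by positivity
    field_simp
    ring
  simp_rw [h]
  rw [MeasureTheory.integral_const_mul,
    MeasureTheory.Measure.integral_comp_div (fun y => (1 + y ^ 2)⁻¹) s,
    integral_univ_inv_one_add_sq, smul_eq_mul, abs_of_pos hs]
  field_simp

theorem cauchy_harmonic_mean_integral (s₁ s₂ : ℝ) (hs₁ : 0 < s₁) (hs₂ : 0 < s₂)
    (α : ℝ) (hα : α ∈ Set.Icc (0:ℝ) 1) :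
    ∫ x : ℝ,
        ((1 / π) * (s₁ / (x ^ 2 + s₁ ^ 2)) * ((1 / π) * (s₂ / (x ^ 2 + s₂ ^ 2))))
          / ((1 - α) * ((1 / π) * (s₁ / (x ^ 2 + s₁ ^ 2)))
              + α * ((1 / π) * (s₂ / (x ^ 2 + s₂ ^ 2))))
      = s₁ * s₂ / (((1 - α) * s₁ + α * s₂)
          * Real.sqrt (((1 - α) * s₁ * s₂ ^ 2 + α * s₂ * s₁ ^ 2)
              / ((1 - α) * s₁ + α * s₂))) := by
  obtain ⟨hα0, hα1⟩ := hα
  set c := (1 - α) * s₁ + α * s₂ with hc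
  set d := (1 - α) * s₁ * s₂ ^ 2 + α * s₂ * s₁ ^ 2 with hd
  have hc0 : 0 < c := by
    rcases eq_or_lt_of_le hα1 with h | h
    · rw [hc, ← h]; nlinarith
    · have h1 : 0 < (1 - α) * s₁ := by nlinarith
      have h2 : 0 ≤ α * s₂ := mul_nonneg hα0 hs₂.le
      rw [hc]; linarith
  have hd0 : 0 < d := by
    rcases eq_or_lt_of_le hα1 with h | h
    · rw [hd, ← h]
      have : (α - α) * s₁ * s₂ ^ 2 = 0 := by ring
      rw [this, zero_add]
      positivity
    · have h1 : 0 < (1 - α) * s₁ * s₂ ^ 2 :=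
        mul_pos (mul_pos (by linarith) hs₁) (pow_pos hs₂ 2)
      have h2 : 0 ≤ α * s₂ * s₁ ^ 2 := by positivity
      rw [hd]; linarith
  set t := Real.sqrt (d / c) with ht
  have ht0 : 0 < t := Real.sqrt_pos.2 (div_pos hd0 hc0)
  have ht2 : t ^ 2 = d / c := Real.sq_sqrt (div_pos hd0 hc0).le
  have hπ : (0:ℝ) < π := Real.pi_pos
  have key : ∀ x : ℝ,
      ((1 / π) * (s₁ / (x ^ 2 + s₁ ^ 2)) * ((1 / π) * (s₂ / (x ^ 2 + s₂ ^ 2))))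
          / ((1 - α) * ((1 / π) * (s₁ / (x ^ 2 + s₁ ^ 2)))
              + α * ((1 / π) * (s₂ / (x ^ 2 + s₂ ^ 2))))
      = (s₁ * s₂ / (c * t)) * (1 / π) * (t / (x ^ 2 + t ^ 2)) := by
    intro x
    have h1 : (0:ℝ) < x ^ 2 + s₁ ^ 2 := by positivity
    have h2 : (0:ℝ) < x ^ 2 + s₂ ^ 2 := by positivity
    have hcd : (0:ℝ) < c * x ^ 2 + d := by positivity
    have hden : (1 - α) * ((1 / π) * (s₁ / (x ^ 2 + s₁ ^ 2)))
              + α * ((1 / π) * (s₂ / (x ^ 2 + s₂ ^ 2)))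
        = (1 / π) * ((c * x ^ 2 + d) / ((x ^ 2 + s₁ ^ 2) * (x ^ 2 + s₂ ^ 2))) := by
      field_simp
      ring
    have hxt : x ^ 2 + t ^ 2 = (c * x ^ 2 + d) / c := by
      rw [ht2]; field_simp
    rw [hden, hxt]
    field_simp
  simp_rw [key]
  have := cauchy_int t ht0
  rw [MeasureTheory.integral_const_mul, this]
  rw [ht] at *
  field_simp
end

section
/- For Cauchy densities p₁(x) = s₁/(π(x²+s₁²)) and p₂(x) = s₂/(π(x²+s₂²)) with s₁, s₂ > 0, the probability of error with equal priors satisfies P_e = ∫ min(p₁(x)/2, p₂(x)/2) dx ≤ √λ/(λ+1), where λ = s₂/s₁. -/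
/-!
Pointwise, `min (a / 2) (b / 2) ≤ a * b / (a + b)`, half the harmonic mean of `a` and `b`.
For two Cauchy densities with a common location and scales `s₁, s₂`, the right-hand side is
`√(s₁ s₂) / (s₁ + s₂)` times the Cauchy density of scale `√(s₁ s₂)`, so its integral is exactly
`√(s₁ s₂) / (s₁ + s₂) = √λ / (λ + 1)`.
-/

open Real MeasureTheory ProbabilityTheory
open scoped NNReal

lemma min_half_le_mul_div_add {K : Type*} [Field K] [LinearOrder K] [IsStrictOrderedRing K]
    {a b : K} (ha : 0 ≤ a) (hb : 0 ≤ b) : min (a / 2) (b / 2) ≤ a * b / (a + b) := by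
  rcases (add_nonneg ha hb).eq_or_lt with hab | hab
  · obtain ⟨rfl, rfl⟩ : a = 0 ∧ b = 0 := ⟨by linarith, by linarith⟩
    simp
  rw [le_div_iff₀ hab]
  rcases le_total a b with h | h
  · nlinarith [min_le_left (a / 2) (b / 2)]
  · nlinarith [min_le_right (a / 2) (b / 2)]

lemma integral_min_half_le_integral_mul_div_add {α : Type*} [MeasurableSpace α] {μ : Measure α}
    {f g : α → ℝ} (hf : ∀ x, 0 ≤ f x) (hg : ∀ x, 0 ≤ g x)
    (hfg : Integrable (fun x => f x * g x / (f x + g x)) μ) :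
    ∫ x, min (f x / 2) (g x / 2) ∂μ ≤ ∫ x, f x * g x / (f x + g x) ∂μ :=
  integral_mono_of_nonneg
    (.of_forall fun x => le_min (div_nonneg (hf x) zero_le_two) (div_nonneg (hg x) zero_le_two))
    hfg (.of_forall fun x => min_half_le_mul_div_add (hf x) (hg x))

lemma cauchyPDFReal_nonneg (x₀ : ℝ) (γ : ℝ≥0) (x : ℝ) : 0 ≤ cauchyPDFReal x₀ γ x := by
  rw [cauchyPDFReal_def]
  positivity

lemma cauchyPDFReal_mul_div_add (x₀ : ℝ) (γ₁ γ₂ : ℝ≥0) (x : ℝ) :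
    cauchyPDFReal x₀ γ₁ x * cauchyPDFReal x₀ γ₂ x / (cauchyPDFReal x₀ γ₁ x + cauchyPDFReal x₀ γ₂ x)
      = √(γ₁ * γ₂) / (γ₁ + γ₂) * cauchyPDFReal x₀ (NNReal.sqrt (γ₁ * γ₂)) x := by
  simp only [cauchyPDFReal_def, Real.coe_sqrt, NNReal.coe_mul]
  rcases eq_zero_or_pos γ₁ with h₁ | h₁
  · simp [h₁]
  rcases eq_zero_or_pos γ₂ with h₂ | h₂
  · simp [h₂]
  have hc : √(γ₁ * γ₂ : ℝ) ^ 2 = γ₁ * γ₂ := Real.sq_sqrt (by positivity)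
  field_simp
  rw [hc]
  ring

lemma integral_min_half_cauchyPDFReal_le (x₀ : ℝ) {γ₁ γ₂ : ℝ≥0} (hγ₁ : γ₁ ≠ 0) (hγ₂ : γ₂ ≠ 0) :
    ∫ x, min (cauchyPDFReal x₀ γ₁ x / 2) (cauchyPDFReal x₀ γ₂ x / 2)
      ≤ √(γ₁ * γ₂) / (γ₁ + γ₂) := by
  have harmonic_eq := cauchyPDFReal_mul_div_add x₀ γ₁ γ₂
  have hc : NNReal.sqrt (γ₁ * γ₂) ≠ 0 := by positivity
  calc _ ≤ ∫ x, cauchyPDFReal x₀ γ₁ x * cauchyPDFReal x₀ γ₂ x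
          / (cauchyPDFReal x₀ γ₁ x + cauchyPDFReal x₀ γ₂ x) :=
        integral_min_half_le_integral_mul_div_add (cauchyPDFReal_nonneg x₀ γ₁)
          (cauchyPDFReal_nonneg x₀ γ₂)
          (by simpa only [harmonic_eq] using (integrable_cauchyPDFReal x₀).const_mul _)
    _ = √(γ₁ * γ₂) / (γ₁ + γ₂) := by
        simp only [harmonic_eq, integral_const_mul, integral_cauchyPDFReal_eq_one x₀ hc, mul_one]

theorem cauchy_bhattacharyya_bound (s₁ s₂ : ℝ) (hs₁ : 0 < s₁) (hs₂ : 0 < s₂) :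
    ∫ x : ℝ, min (s₁ / (π * (x ^ 2 + s₁ ^ 2)) / 2) (s₂ / (π * (x ^ 2 + s₂ ^ 2)) / 2)
      ≤ Real.sqrt (s₂ / s₁) / (s₂ / s₁ + 1) := by
  lift s₁ to ℝ≥0 using hs₁.le
  lift s₂ to ℝ≥0 using hs₂.le
  have hpdf (γ : ℝ≥0) (x : ℝ) : γ / (π * (x ^ 2 + γ ^ 2)) = cauchyPDFReal 0 γ x := by
    rw [cauchyPDFReal_def, sub_zero]
    field_simp
  have hratio : √(s₂ / s₁ : ℝ) / (s₂ / s₁ + 1) = √(s₁ * s₂ : ℝ) / (s₁ + s₂) := by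
    have : (s₂ / s₁ : ℝ) = s₁ * s₂ / s₁ ^ 2 := by field_simp
    rw [this, Real.sqrt_div' _ (by positivity), Real.sqrt_sq hs₁.le]
    field_simp
    ring
  simp only [hpdf, hratio]
  exact integral_min_half_cauchyPDFReal_le 0 (by exact_mod_cast hs₁.ne') (by exact_mod_cast hs₂.ne')
end

section
/- Define P_α(λ) = (1/2)·λ/√((1-α+αλ)((1-α)λ² + αλ)) for λ > 0, λ ≠ 1, and α ∈ [0,1]. Then dP_α/dα = (1/4)(λ-1)²λ²(2α-1)/(λ((λ-1)α+1)(-αλ+λ+α))^(3/2), and the unique minimizer of P_α over α ∈ [0,1] is α* = 1/2, with minimum value √λ/(λ+1). -/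
/-! The radicand of `P_α(λ)` is a quadratic in `α` whose leading coefficient is `-λ(λ-1)²`, so
completing the square gives
`(1-α+αλ)((1-α)λ²+αλ) = λ(λ+1)²/4 - λ(λ-1)²(α-1/2)²`.
For `λ ≠ 1` it is therefore uniquely maximised at `α = 1/2`, where its square root is
`√λ (λ+1)/2`; as `P_α(λ)` is `λ/2` divided by that square root, `P_α(λ)` is uniquely minimised
there. -/

open Real

lemma rpow_three_halves {x : ℝ} (hx : 0 ≤ x) : x ^ ((3 : ℝ) / 2) = x * √x := by
  rw [show (3 : ℝ) / 2 = 1 + 1 / 2 by norm_num, rpow_add' hx (by norm_num), rpow_one,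
    sqrt_eq_rpow]

lemma HasDerivAt.const_div_sqrt {f : ℝ → ℝ} {f' x : ℝ} (c : ℝ) (hf : HasDerivAt f f' x)
    (hx : 0 < f x) :
    HasDerivAt (fun y => c / √(f y)) (-(c * f') / (2 * f x ^ ((3 : ℝ) / 2))) x := by
  have hsqrt : 0 < √(f x) := sqrt_pos.2 hx
  refine ((hasDerivAt_const x c).div (hf.sqrt hx.ne') hsqrt.ne').congr_deriv ?_
  rw [rpow_three_halves hx.le]
  field_simp
  rw [sq_sqrt hx.le]
  ring

namespace CauchyChernoff

def radicand (lam α : ℝ) : ℝ := (1 - α + α * lam) * ((1 - α) * lam ^ 2 + α * lam)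

lemma radicand_eq_sub_sq (lam α : ℝ) :
    radicand lam α = lam * (lam + 1) ^ 2 / 4 - lam * (lam - 1) ^ 2 * (α - 1 / 2) ^ 2 := by
  unfold radicand; ring

lemma radicand_half {lam : ℝ} (hlam : 0 ≤ lam) :
    radicand lam (1 / 2) = (√lam * (lam + 1) / 2) ^ 2 := by
  rw [radicand_eq_sub_sq, div_pow, mul_pow, sq_sqrt hlam]
  ring

lemma radicand_pos {lam α : ℝ} (hlam : 0 < lam) (hα : α ∈ Set.Icc (0 : ℝ) 1) :
    0 < radicand lam α := by
  obtain ⟨hα0, hα1⟩ := hα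
  have hconvex {a b : ℝ} (ha : 0 < a) (hb : 0 < b) : 0 < (1 - α) * a + α * b := by
    rcases hα1.lt_or_eq with hα1 | rfl
    · exact add_pos_of_pos_of_nonneg (mul_pos (sub_pos.2 hα1) ha) (mul_nonneg hα0 hb.le)
    · simpa using hb
  have h₁ : 0 < 1 - α + α * lam := by linarith [hconvex one_pos hlam]
  have h₂ := hconvex (pow_pos hlam 2) hlam
  unfold radicand
  positivity

lemma radicand_lt_radicand_half {lam α : ℝ} (hlam : 0 < lam) (hne : lam ≠ 1) (hα : α ≠ 1 / 2) :
    radicand lam α < radicand lam (1 / 2) := by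
  have : 0 < lam * (lam - 1) ^ 2 * (α - 1 / 2) ^ 2 := by
    have := sub_ne_zero.2 hne
    have := sub_ne_zero.2 hα
    positivity
  rw [radicand_eq_sub_sq, radicand_eq_sub_sq]
  linarith

lemma hasDerivAt_radicand (lam α : ℝ) :
    HasDerivAt (radicand lam) (lam * (lam - 1) ^ 2 * (1 - 2 * α)) α := by
  rw [funext (radicand_eq_sub_sq lam)]
  refine ((((hasDerivAt_id α).sub_const (1 / 2)).pow 2).const_mul _ |>.const_sub _).congr_deriv ?_
  simp only [id_eq, mul_one]
  ring

end CauchyChernoff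

open CauchyChernoff in
theorem cauchy_chernoff_bound_minimized_at_half (lam : ℝ) (hlam : 0 < lam) (hne : lam ≠ 1) :
    (∀ α ∈ Set.Icc (0:ℝ) 1,
      deriv (fun α : ℝ =>
          (1 / 2) * lam / Real.sqrt ((1 - α + α * lam) * ((1 - α) * lam ^ 2 + α * lam))) α
        = (1 / 4) * (lam - 1) ^ 2 * lam ^ 2 * (2 * α - 1)
            / (lam * ((lam - 1) * α + 1) * (-α * lam + lam + α)) ^ ((3:ℝ) / 2)) ∧
    (∀ α ∈ Set.Icc (0:ℝ) 1, α ≠ 1 / 2 →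
      (1 / 2) * lam / Real.sqrt ((1 - (1/2:ℝ) + (1/2:ℝ) * lam)
          * ((1 - (1/2:ℝ)) * lam ^ 2 + (1/2:ℝ) * lam))
        < (1 / 2) * lam / Real.sqrt ((1 - α + α * lam) * ((1 - α) * lam ^ 2 + α * lam))) ∧
    (1 / 2) * lam / Real.sqrt ((1 - (1/2:ℝ) + (1/2:ℝ) * lam)
        * ((1 - (1/2:ℝ)) * lam ^ 2 + (1/2:ℝ) * lam))
      = Real.sqrt lam / (lam + 1) := by
  have hfold (α : ℝ) : (1 - α + α * lam) * ((1 - α) * lam ^ 2 + α * lam) = radicand lam α := rfl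
  have hdenom (α : ℝ) : lam * ((lam - 1) * α + 1) * (-α * lam + lam + α) = radicand lam α := by
    unfold radicand; ring
  simp only [hfold, hdenom]
  refine ⟨fun α hα => ?_, fun α hα hα2 => ?_, ?_⟩
  · rw [((hasDerivAt_radicand lam α).const_div_sqrt _ (radicand_pos hlam hα)).deriv]
    ring
  · exact div_lt_div_of_pos_left (by positivity) (sqrt_pos.2 (radicand_pos hlam hα))
      (sqrt_lt_sqrt (radicand_pos hlam hα).le (radicand_lt_radicand_half hlam hne hα2))
  · have hsqrt : 0 < √lam := sqrt_pos.2 hlam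
    rw [radicand_half hlam.le, sqrt_sq (by positivity)]
    field_simp
    rw [sq_sqrt hlam.le]
end

section
/- For Cauchy densities with scales s₁, s₂ > 0 and equal priors, the probability of error is P_e = 1 - (2/π)arctan(√λ), where λ = s₂/s₁ ≥ 1. -/
/-!
Two Cauchy densities with common location `x₀` and scales `γ₁ ≤ γ₂` cross exactly where
`(x - x₀)² = γ₁ γ₂`: the wider one lies below the narrower one on the central interval, the
narrower one below the wider one in the tails. The integral of their minimum is therefore the
tail mass of the narrow law plus the central mass of the wide one, both read off from the
distribution function `1/2 + arctan ((x - x₀) / γ) / π`. With `λ = γ₂ / γ₁` and `c = √(γ₁ γ₂)`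
one has `c / γ₁ = √λ` and `c / γ₂ = 1 / √λ`, and `arctan (1 / √λ) = π / 2 - arctan √λ`
collapses everything to `2 - (4 / π) arctan √λ`.
-/

open Real MeasureTheory Set Filter Topology ProbabilityTheory
open scoped NNReal

noncomputable def cauchyCDFReal (x₀ : ℝ) (γ : ℝ≥0) (x : ℝ) : ℝ :=
  1 / 2 + arctan ((x - x₀) / γ) / π

section
variable {x₀ : ℝ} {γ : ℝ≥0}

lemma hasDerivAt_cauchyCDFReal (hγ : γ ≠ 0) (x : ℝ) :
    HasDerivAt (cauchyCDFReal x₀ γ) (cauchyPDFReal x₀ γ x) x := by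
  have hγ' : (γ : ℝ) ≠ 0 := by exact_mod_cast hγ
  refine ((((hasDerivAt_id' x).sub_const x₀).div_const (γ : ℝ)).arctan.div_const π).const_add
    (1 / 2 : ℝ) |>.congr_deriv ?_
  rw [cauchyPDFReal_def]
  field_simp
  ring

lemma tendsto_cauchyCDFReal_atTop (hγ : γ ≠ 0) :
    Tendsto (cauchyCDFReal x₀ γ) atTop (𝓝 1) := by
  have h : Tendsto (fun x : ℝ => (x - x₀) / γ) atTop atTop :=
    (tendsto_atTop_add_const_right _ _ tendsto_id).atTop_div_const (by positivity)
  have hlim : (1 : ℝ) = 1 / 2 + π / 2 / π := by field_simp; ring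
  rw [hlim]
  exact (((tendsto_nhds_of_tendsto_nhdsWithin tendsto_arctan_atTop).comp h).div_const π).const_add _

lemma tendsto_cauchyCDFReal_atBot (hγ : γ ≠ 0) :
    Tendsto (cauchyCDFReal x₀ γ) atBot (𝓝 0) := by
  have h : Tendsto (fun x : ℝ => (x - x₀) / γ) atBot atBot :=
    (tendsto_atBot_add_const_right _ _ tendsto_id).atBot_div_const (by positivity)
  have hlim : (0 : ℝ) = 1 / 2 + -(π / 2) / π := by field_simp; ring
  rw [hlim]
  exact (((tendsto_nhds_of_tendsto_nhdsWithin tendsto_arctan_atBot).comp h).div_const π).const_add _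

lemma integral_Iic_cauchyPDFReal (hγ : γ ≠ 0) (a : ℝ) :
    ∫ x in Iic a, cauchyPDFReal x₀ γ x = cauchyCDFReal x₀ γ a := by
  rw [integral_Iic_of_hasDerivAt_of_tendsto' (fun x _ => hasDerivAt_cauchyCDFReal hγ x)
    (integrable_cauchyPDFReal x₀ (γ := γ)).integrableOn (tendsto_cauchyCDFReal_atBot hγ), sub_zero]

lemma integral_Ioi_cauchyPDFReal (hγ : γ ≠ 0) (a : ℝ) :
    ∫ x in Ioi a, cauchyPDFReal x₀ γ x = 1 - cauchyCDFReal x₀ γ a :=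
  integral_Ioi_of_hasDerivAt_of_tendsto' (fun x _ => hasDerivAt_cauchyCDFReal hγ x)
    (integrable_cauchyPDFReal x₀ (γ := γ)).integrableOn (tendsto_cauchyCDFReal_atTop hγ)

lemma integral_Ioc_cauchyPDFReal (hγ : γ ≠ 0) {a b : ℝ} (hab : a ≤ b) :
    ∫ x in Ioc a b, cauchyPDFReal x₀ γ x = cauchyCDFReal x₀ γ b - cauchyCDFReal x₀ γ a := by
  rw [← intervalIntegral.integral_of_le hab]
  exact intervalIntegral.integral_eq_sub_of_hasDerivAt (fun x _ => hasDerivAt_cauchyCDFReal hγ x)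
    (integrable_cauchyPDFReal x₀ (γ := γ)).intervalIntegrable

lemma cauchyPDFReal_le_cauchyPDFReal_of_mul_le_sq {γ₁ γ₂ : ℝ≥0} (hγ₁ : γ₁ ≠ 0) (h : γ₁ ≤ γ₂)
    {x : ℝ} (hx : (γ₁ : ℝ) * γ₂ ≤ (x - x₀) ^ 2) :
    cauchyPDFReal x₀ γ₁ x ≤ cauchyPDFReal x₀ γ₂ x := by
  have h' : (γ₁ : ℝ) ≤ γ₂ := h
  have : (0 : ℝ) < γ₁ := by positivity
  have : (0 : ℝ) < γ₂ := by linarith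
  simp only [cauchyPDFReal_def, mul_assoc]
  gcongr _ * ?_
  rw [← div_eq_mul_inv, ← div_eq_mul_inv, div_le_div_iff₀ (by positivity) (by positivity)]
  nlinarith [mul_le_mul_of_nonneg_left hx (sub_nonneg.2 h')]

lemma cauchyPDFReal_le_cauchyPDFReal_of_sq_le_mul {γ₁ γ₂ : ℝ≥0} (hγ₁ : γ₁ ≠ 0) (h : γ₁ ≤ γ₂)
    {x : ℝ} (hx : (x - x₀) ^ 2 ≤ (γ₁ : ℝ) * γ₂) :
    cauchyPDFReal x₀ γ₂ x ≤ cauchyPDFReal x₀ γ₁ x := by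
  have h' : (γ₁ : ℝ) ≤ γ₂ := h
  have : (0 : ℝ) < γ₁ := by positivity
  have : (0 : ℝ) < γ₂ := by linarith
  simp only [cauchyPDFReal_def, mul_assoc]
  gcongr _ * ?_
  rw [← div_eq_mul_inv, ← div_eq_mul_inv, div_le_div_iff₀ (by positivity) (by positivity)]
  nlinarith [mul_le_mul_of_nonneg_left hx (sub_nonneg.2 h')]

end

lemma integral_eq_integral_Iic_add_Ioc_add_Ioi {E : Type*} [NormedAddCommGroup E] [NormedSpace ℝ E]
    {μ : Measure ℝ} {f : ℝ → E} (hf : Integrable f μ) {a b : ℝ} (hab : a ≤ b) :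
    ∫ x, f x ∂μ = ∫ x in Iic a, f x ∂μ + ∫ x in Ioc a b, f x ∂μ + ∫ x in Ioi b, f x ∂μ := by
  rw [← setIntegral_union (Iic_disjoint_Ioc le_rfl) measurableSet_Ioc hf.integrableOn
    hf.integrableOn, Iic_union_Ioc_eq_Iic hab, intervalIntegral.integral_Iic_add_Ioi
    hf.integrableOn hf.integrableOn]

theorem integral_min_cauchyPDFReal {x₀ : ℝ} {γ₁ γ₂ : ℝ≥0} (hγ₁ : γ₁ ≠ 0) (h : γ₁ ≤ γ₂) :
    ∫ x, min (cauchyPDFReal x₀ γ₁ x) (cauchyPDFReal x₀ γ₂ x)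
      = 2 - 4 / π * arctan √(γ₂ / γ₁ : ℝ) := by
  have hγ₂ : γ₂ ≠ 0 := (lt_of_lt_of_le (pos_iff_ne_zero.2 hγ₁) h).ne'
  have h₁ : (0 : ℝ) < γ₁ := by positivity
  have h₂ : (0 : ℝ) < γ₂ := by positivity
  set t := √(γ₂ / γ₁ : ℝ)
  have ht₀ : 0 < t := by positivity
  have ht₂ : t ^ 2 = γ₂ / γ₁ := sq_sqrt (by positivity)
  -- `x₀ ± c`, with `c = √(γ₁ γ₂)`, are the points where the two densities cross
  set c := γ₁ * t
  have hc₀ : 0 ≤ c := by positivity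
  have hc_sq : c ^ 2 = γ₁ * γ₂ := by rw [mul_pow, ht₂]; field_simp
  have hIic : ∫ x in Iic (x₀ - c), min (cauchyPDFReal x₀ γ₁ x) (cauchyPDFReal x₀ γ₂ x)
      = cauchyCDFReal x₀ γ₁ (x₀ - c) := by
    rw [← integral_Iic_cauchyPDFReal hγ₁]
    refine setIntegral_congr_fun measurableSet_Iic fun x hx => min_eq_left ?_
    exact cauchyPDFReal_le_cauchyPDFReal_of_mul_le_sq hγ₁ h (by nlinarith [mem_Iic.1 hx])
  have hIoi : ∫ x in Ioi (x₀ + c), min (cauchyPDFReal x₀ γ₁ x) (cauchyPDFReal x₀ γ₂ x)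
      = 1 - cauchyCDFReal x₀ γ₁ (x₀ + c) := by
    rw [← integral_Ioi_cauchyPDFReal hγ₁]
    refine setIntegral_congr_fun measurableSet_Ioi fun x hx => min_eq_left ?_
    exact cauchyPDFReal_le_cauchyPDFReal_of_mul_le_sq hγ₁ h (by nlinarith [mem_Ioi.1 hx])
  have hIoc : ∫ x in Ioc (x₀ - c) (x₀ + c), min (cauchyPDFReal x₀ γ₁ x) (cauchyPDFReal x₀ γ₂ x)
      = cauchyCDFReal x₀ γ₂ (x₀ + c) - cauchyCDFReal x₀ γ₂ (x₀ - c) := by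
    rw [← integral_Ioc_cauchyPDFReal hγ₂ (by linarith)]
    refine setIntegral_congr_fun measurableSet_Ioc fun x hx => min_eq_right ?_
    obtain ⟨hlo, hhi⟩ := mem_Ioc.1 hx
    exact cauchyPDFReal_le_cauchyPDFReal_of_sq_le_mul hγ₁ h (by nlinarith)
  have hint : Integrable fun x => min (cauchyPDFReal x₀ γ₁ x) (cauchyPDFReal x₀ γ₂ x) :=
    (integrable_cauchyPDFReal x₀).inf (integrable_cauchyPDFReal x₀)
  rw [integral_eq_integral_Iic_add_Ioc_add_Ioi hint (by linarith : x₀ - c ≤ x₀ + c),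
    hIic, hIoc, hIoi]
  have hc_div₁ : c / γ₁ = t := mul_div_cancel_left₀ t h₁.ne'
  have hc_div₂ : c / γ₂ = t⁻¹ := by
    rw [div_eq_iff h₂.ne', eq_comm, ← div_eq_inv_mul, div_eq_iff ht₀.ne', mul_assoc, ← sq, ht₂]
    field_simp
  simp only [cauchyCDFReal, sub_sub_cancel_left, add_sub_cancel_left, neg_div, arctan_neg,
    hc_div₁, hc_div₂, arctan_inv_of_pos ht₀]
  field_simp
  ring

lemma cauchyPDFReal_zero_toNNReal {s : ℝ} (hs : 0 ≤ s) (x : ℝ) :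
    cauchyPDFReal 0 s.toNNReal x = s / (π * (x ^ 2 + s ^ 2)) := by
  rw [cauchyPDFReal_def, coe_toNNReal s hs, sub_zero]
  field_simp

theorem cauchy_prob_error (s₁ s₂ : ℝ) (hs₁ : 0 < s₁) (hs : s₁ ≤ s₂) :
    ∫ x : ℝ, min (s₁ / (π * (x ^ 2 + s₁ ^ 2)) / 2) (s₂ / (π * (x ^ 2 + s₂ ^ 2)) / 2)
      = 1 - (2 / π) * arctan (Real.sqrt (s₂ / s₁)) := by
  have hs₂ : 0 ≤ s₂ := hs₁.le.trans hs
  simp only [← cauchyPDFReal_zero_toNNReal hs₁.le, ← cauchyPDFReal_zero_toNNReal hs₂,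
    min_div_div_right (zero_le_two (α := ℝ)), integral_div]
  rw [integral_min_cauchyPDFReal (by simpa using hs₁) (toNNReal_le_toNNReal hs),
    coe_toNNReal s₁ hs₁.le, coe_toNNReal s₂ hs₂]
  ring
end

section
/- Define the gap Δ(λ) = √λ/(1+λ) - 1 + (2/π)arctan(√λ) for λ ≥ 1. Then Δ(1) = 0, Δ(λ) > 0 for λ > 1, and Δ attains its maximum at λ = (2+π)/(π-2). -/
/-!
Substituting `t = √λ` turns the gap into `g t = t / (1 + t²) - 1 + (2/π) arctan t`, whose
derivative is `(1 - 2/π) (t⋆² - t²) / (1 + t²)²` with `t⋆² = (2 + π)/(π - 2)`. So `g` increases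
on `[0, t⋆]` from `g 1 = 0` and decreases on `[t⋆, ∞)` towards its limit `0`; hence it is
positive on `(1, ∞)` and maximal at `t⋆`.
-/

open Real Filter Topology Set

noncomputable section

namespace CauchyGap

def gap (t : ℝ) : ℝ := t / (1 + t ^ 2) - 1 + (2 / π) * arctan t

def tStar : ℝ := √((2 + π) / (π - 2))

lemma pi_sub_two_pos : 0 < π - 2 := by linarith [pi_gt_three]

lemma one_sub_two_div_pi_pos : 0 < 1 - 2 / π := by
  rw [sub_pos, div_lt_one pi_pos]
  linarith [pi_gt_three]

lemma tStar_sq : tStar ^ 2 = (2 + π) / (π - 2) :=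
  sq_sqrt (div_pos (by positivity) pi_sub_two_pos).le

lemma one_lt_tStar : 1 < tStar := by
  rw [tStar, lt_sqrt zero_le_one, one_pow, one_lt_div pi_sub_two_pos]
  linarith

lemma tStar_pos : 0 < tStar := one_pos.trans one_lt_tStar

lemma gap_sqrt {lam : ℝ} (hlam : 0 ≤ lam) :
    √lam / (1 + lam) - 1 + (2 / π) * arctan √lam = gap √lam := by
  rw [gap, sq_sqrt hlam]

lemma gap_one : gap 1 = 0 := by
  rw [gap, arctan_one]
  field_simp
  ring

lemma hasDerivAt_gap (t : ℝ) :
    HasDerivAt gap ((1 - 2 / π) * (tStar ^ 2 - t ^ 2) / (1 + t ^ 2) ^ 2) t := by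
  have hden : 1 + t ^ 2 ≠ 0 := by positivity
  have hfrac : HasDerivAt (fun t : ℝ => t / (1 + t ^ 2))
      ((1 * (1 + t ^ 2) - t * (2 * t ^ 1)) / (1 + t ^ 2) ^ 2) t :=
    (hasDerivAt_id t).div ((hasDerivAt_pow 2 t).const_add 1) hden
  refine ((hfrac.sub_const 1).add ((hasDerivAt_arctan t).const_mul (2 / π))).congr_deriv ?_
  rw [tStar_sq]
  field_simp [pi_sub_two_pos.ne']
  ring

lemma continuous_gap : Continuous gap :=
  continuous_iff_continuousAt.2 fun t => (hasDerivAt_gap t).continuousAt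

lemma strictMonoOn_gap : StrictMonoOn gap (Icc 0 tStar) := by
  refine strictMonoOn_of_hasDerivWithinAt_pos (convex_Icc _ _) continuous_gap.continuousOn
    (fun t _ => (hasDerivAt_gap t).hasDerivWithinAt) fun t ht => ?_
  rw [interior_Icc] at ht
  have hsq : t ^ 2 < tStar ^ 2 := pow_lt_pow_left₀ ht.2 ht.1.le two_ne_zero
  exact div_pos (mul_pos one_sub_two_div_pi_pos (sub_pos.2 hsq)) (by positivity)

lemma strictAntiOn_gap : StrictAntiOn gap (Ici tStar) := by
  refine strictAntiOn_of_hasDerivWithinAt_neg (convex_Ici _) continuous_gap.continuousOn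
    (fun t _ => (hasDerivAt_gap t).hasDerivWithinAt) fun t ht => ?_
  rw [interior_Ici] at ht
  have hsq : tStar ^ 2 < t ^ 2 := pow_lt_pow_left₀ ht tStar_pos.le two_ne_zero
  exact div_neg_of_neg_of_pos (mul_neg_of_pos_of_neg one_sub_two_div_pi_pos (sub_neg.2 hsq))
    (by positivity)

lemma tendsto_gap_atTop : Tendsto gap atTop (𝓝 0) := by
  have hfrac : Tendsto (fun t : ℝ => t / (1 + t ^ 2)) atTop (𝓝 0) := by
    refine squeeze_zero' ?_ ?_ tendsto_inv_atTop_zero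
    · filter_upwards [eventually_ge_atTop 0] with t ht
      positivity
    · filter_upwards [eventually_gt_atTop 0] with t ht
      rw [div_le_iff₀ (by positivity), inv_mul_eq_div, le_div_iff₀ ht]
      nlinarith
  have harctan : Tendsto (fun t => (2 / π) * arctan t) atTop (𝓝 ((2 / π) * (π / 2))) :=
    (tendsto_arctan_atTop.mono_right nhdsWithin_le_nhds).const_mul _
  have hlim : (0 : ℝ) - 1 + (2 / π) * (π / 2) = 0 := by
    field_simp
    ring
  have hsum := (hfrac.sub_const 1).add harctan
  rwa [hlim] at hsum

lemma gap_pos_of_tStar_le {t : ℝ} (ht : tStar ≤ t) : 0 < gap t := by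
  have hnonneg : ∀ s, tStar ≤ s → 0 ≤ gap s := fun s hs =>
    le_of_tendsto tendsto_gap_atTop <| by
      filter_upwards [eventually_ge_atTop s] with u hu
      exact strictAntiOn_gap.antitoneOn hs (hs.trans hu) hu
  exact (hnonneg (t + 1) (by linarith)).trans_lt
    (strictAntiOn_gap ht (show tStar ≤ t + 1 by linarith) (lt_add_one t))

lemma gap_pos {t : ℝ} (ht : 1 < t) : 0 < gap t := by
  rcases le_or_gt t tStar with h | h
  · rw [← gap_one]
    exact strictMonoOn_gap ⟨zero_le_one, one_lt_tStar.le⟩ ⟨by linarith, h⟩ ht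
  · exact gap_pos_of_tStar_le h.le

lemma gap_le_gap_tStar {t : ℝ} (ht : 0 ≤ t) : gap t ≤ gap tStar := by
  rcases le_total t tStar with h | h
  · exact strictMonoOn_gap.monotoneOn ⟨ht, h⟩ ⟨tStar_pos.le, le_rfl⟩ h
  · exact strictAntiOn_gap.antitoneOn self_mem_Ici h h

end CauchyGap

end

open CauchyGap in
theorem cauchy_gap_properties :
    (Real.sqrt 1 / (1 + 1) - 1 + (2 / π) * arctan (Real.sqrt 1) = 0) ∧
    (∀ lam : ℝ, 1 < lam →
      0 < Real.sqrt lam / (1 + lam) - 1 + (2 / π) * arctan (Real.sqrt lam)) ∧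
    (∀ lam : ℝ, 1 ≤ lam →
      Real.sqrt lam / (1 + lam) - 1 + (2 / π) * arctan (Real.sqrt lam)
        ≤ Real.sqrt ((2 + π) / (π - 2)) / (1 + (2 + π) / (π - 2)) - 1
            + (2 / π) * arctan (Real.sqrt ((2 + π) / (π - 2)))) := by
  have hmax : 0 ≤ (2 + π) / (π - 2) := (div_pos (by positivity) pi_sub_two_pos).le
  refine ⟨?_, fun lam hlam => ?_, fun lam hlam => ?_⟩
  · rw [gap_sqrt zero_le_one, sqrt_one, gap_one]
  · rw [gap_sqrt (by linarith)]
    exact gap_pos (lt_sqrt_of_sq_lt (by rwa [one_pow]))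
  · rw [gap_sqrt (by linarith), gap_sqrt hmax]
    exact gap_le_gap_tStar (sqrt_nonneg lam)
end
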